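/- Let R be a commutative ring with unity, I ⊊ R an ideal, n > 1, and (x_1,…,x_n) ∈ R^n with (x_1)+⋯+(x_n)+I = R. Suppose R satisfies CMH for the tuple (x_1,…,x_n) with respect to I. Then there exist t_1,…,t_n ∈ I such that (x_1+t_1)+(x_2+t_2)+⋯+(x_n+t_n) = R (sum of principal ideals). -/
import Mathlib

def ChoiceMultiplierHypothesis {R : Type*} [CommRing R] (I : Ideal R) {n : ℕ}
    (x : Fin n → R) : Prop :=
  ∃ a : Fin n → R, (∑ i, Ideal.span {a i} = ⊤) ∧ (∑ i, a i * x i) - 1 ∈ I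

theorem aux_sum_span {R : Type*} [CommRing R] {n : ℕ} (a : Fin n → R) :
    (∑ i, Ideal.span {a i}) = Ideal.span (Set.range a) := by
  rw [Ideal.sum_eq_sup, Finset.sup_eq_iSup]
  simp only [Ideal.span, Submodule.span_range_eq_iSup]
  simp only [Finset.mem_univ, iSup_pos]

theorem cmh_implies_unital_perturbation {R : Type*} [CommRing R] (I : Ideal R) (hI : I ≠ ⊤)
    (n : ℕ) (hn : 1 < n) (x : Fin n → R)
    (hx : (∑ i, Ideal.span {x i}) + I = ⊤)
    (hcmh : ChoiceMultiplierHypothesis I x) :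
    ∃ t : Fin n → R, (∀ i, t i ∈ I) ∧ ∑ i, Ideal.span {x i + t i} = ⊤ := by
  obtain ⟨a, ha, he⟩ := hcmh
  rw [aux_sum_span] at ha
  have h1 : (1 : R) ∈ Ideal.span (Set.range a) := ha ▸ Submodule.mem_top
  rw [Ideal.span, Submodule.mem_span_range_iff_exists_fun] at h1
  simp only [smul_eq_mul] at h1
  obtain ⟨b, hb⟩ := h1
  set e := (∑ i, a i * x i) - 1 with hedef
  refine ⟨fun i => -(b i * e), fun i => Submodule.neg_mem _ (I.mul_mem_left _ he), ?_⟩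
  rw [aux_sum_span, Ideal.eq_top_iff_one, Ideal.span, Submodule.mem_span_range_iff_exists_fun]
  simp only [smul_eq_mul]
  refine ⟨a, ?_⟩
  have : ∑ i, a i * (x i + -(b i * e)) = (∑ i, a i * x i) - (∑ i, b i * a i) * e := by
    rw [Finset.sum_mul]; rw [← Finset.sum_sub_distrib]; congr 1; ext i; ring
  rw [this, hb, hedef]; ring
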